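/- arXiv:2408.08029 — 5 statements merged into one kernel-verified Lean document; each statement's English description precedes it below -/
import Mathlib

section
/- Classical solutions of the stabilised Euler-Poisson-Boltzmann system ∂_t ρ + div(ρu - q) = 0, ∂_t(ρu) + div(u⊗(ρu - q)) = -ρ∇φ + ∇Λ, -ε²Δφ = ρ - e^φ satisfy the total energy identity ∂_t( (ε²/2)|∇φ|² + (φ-1)e^φ + (1/2)ρ|u|² ) + div( (φ + |u|²/2)(ρu - q) - ε²φ∂_t(∇φ) - uΛ ) = -q·∇φ - div(u)Λ. -/
open Real RealInnerProductSpace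


noncomputable def vdiv {d : ℕ} (v : EuclideanSpace ℝ (Fin d) → EuclideanSpace ℝ (Fin d))
    (x : EuclideanSpace ℝ (Fin d)) : ℝ :=
  ∑ i, fderiv ℝ v x (EuclideanSpace.single i 1) i

section aux

variable {d : ℕ}

local notation "E" => EuclideanSpace ℝ (Fin d)

def jfun (f : ℝ → E → ℝ) : ℝ × E → ℝ := fun p => f p.1 p.2
def jc (f : ℝ → E → E) (i : Fin d) : ℝ × E → ℝ := fun p => f p.1 p.2 i

@[simp] lemma jfun_apply (f : ℝ → E → ℝ) (s : ℝ) (y : E) : jfun f (s, y) = f s y := rfl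
@[simp] lemma jc_apply (f : ℝ → E → E) (i : Fin d) (s : ℝ) (y : E) :
    jc f i (s, y) = f s y i := rfl

lemma contDiff_pd {F : ℝ × E → ℝ} (hF : ContDiff ℝ (⊤ : ℕ∞) F) (v : ℝ × E) :
    ContDiff ℝ (⊤ : ℕ∞) (fun p => fderiv ℝ F p v) :=
  (hF.fderiv_right (by simp)).clm_apply contDiff_const

lemma slice_hasDerivAt {F : ℝ × E → ℝ} (hF : ContDiff ℝ (⊤ : ℕ∞) F) (t : ℝ) (x : E) :
    HasDerivAt (fun s => F (s, x)) (fderiv ℝ F (t, x) (1, 0)) t := by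
  have h := (hF.differentiable (by simp) (t, x)).hasFDerivAt
  have h2 : HasDerivAt (fun s : ℝ => ((s, x) : ℝ × E)) ((1 : ℝ), (0 : E)) t :=
    HasDerivAt.prodMk (hasDerivAt_id t) (hasDerivAt_const t x)
  exact h.comp_hasDerivAt t h2

lemma slice_hasFDerivAt {F : ℝ × E → ℝ} (hF : ContDiff ℝ (⊤ : ℕ∞) F) (t : ℝ) (x : E) :
    HasFDerivAt (fun y => F (t, y))
      ((fderiv ℝ F (t, x)).comp ((0 : E →L[ℝ] ℝ).prod (ContinuousLinearMap.id ℝ E))) x := by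
  have h := (hF.differentiable (by simp) (t, x)).hasFDerivAt
  exact h.comp x (HasFDerivAt.prodMk (hasFDerivAt_const t x) (hasFDerivAt_id x))

lemma slice_diff {F : ℝ × E → ℝ} (hF : ContDiff ℝ (⊤ : ℕ∞) F) (t : ℝ) (x : E) :
    DifferentiableAt ℝ (fun y => F (t, y)) x :=
  (slice_hasFDerivAt hF t x).differentiableAt

lemma slice_fderiv {F : ℝ × E → ℝ} (hF : ContDiff ℝ (⊤ : ℕ∞) F) (t : ℝ) (x : E) (v : E) :
    fderiv ℝ (fun y => F (t, y)) x v = fderiv ℝ F (t, x) (0, v) := by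
  rw [(slice_hasFDerivAt hF t x).fderiv]; simp

lemma pd_swap {F : ℝ × E → ℝ} (hF : ContDiff ℝ (⊤ : ℕ∞) F) (P : ℝ × E) (v w : ℝ × E) :
    fderiv ℝ (fun p => fderiv ℝ F p v) P w = fderiv ℝ (fun p => fderiv ℝ F p w) P v := by
  have hd : DifferentiableAt ℝ (fderiv ℝ F) P :=
    ((hF.fderiv_right (m := (⊤ : ℕ∞)) (by simp)).differentiable (by simp)) P
  have h1 : ∀ z : ℝ × E, fderiv ℝ (fun p => fderiv ℝ F p z) P
      = (fderiv ℝ (fderiv ℝ F) P).flip z := by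
    intro z
    rw [fderiv_clm_apply hd (differentiableAt_const z)]
    simp
  have hsym : IsSymmSndFDerivAt ℝ F P :=
    hF.contDiffAt.isSymmSndFDerivAt (by rw [minSmoothness_of_isRCLikeNormedField]; exact WithTop.coe_le_coe.2 (le_top : (2 : ℕ∞) ≤ ⊤))
  rw [h1, h1]
  simp only [ContinuousLinearMap.flip_apply]
  exact hsym.eq w v

lemma fderiv_component {α : Type*} [NormedAddCommGroup α] [NormedSpace ℝ α]
    {g : α → E} {x : α} (h : DifferentiableAt ℝ g x) (v : α) (i : Fin d) :
    fderiv ℝ g x v i = fderiv ℝ (fun y => g y i) x v := by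
  have h2 : fderiv ℝ (fun y => g y i) x = (EuclideanSpace.proj i).comp (fderiv ℝ g x) := by
    exact ((EuclideanSpace.proj i).hasFDerivAt.comp x h.hasFDerivAt).fderiv
  rw [h2]; simp

lemma deriv_component {g : ℝ → E} {t : ℝ} (h : DifferentiableAt ℝ g t) (i : Fin d) :
    deriv g t i = deriv (fun s => g s i) t := by
  rw [← fderiv_apply_one_eq_deriv, ← fderiv_apply_one_eq_deriv, fderiv_component h 1 i]

lemma gradient_component {f : E → ℝ} {x : E} (i : Fin d) :
    gradient f x i = fderiv ℝ f x (EuclideanSpace.single i 1) := by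
  have h1 : ⟪gradient f x, EuclideanSpace.single i (1:ℝ)⟫
      = fderiv ℝ f x (EuclideanSpace.single i 1) := by
    rw [gradient, InnerProductSpace.toDual_symm_apply]
  rw [← h1, real_inner_comm, EuclideanSpace.inner_single_left]
  simp

lemma vdiv_eq_sum {v : E → E} {x : E} (h : DifferentiableAt ℝ v x) :
    vdiv v x = ∑ i, fderiv ℝ (fun y => v y i) x (EuclideanSpace.single i 1) := by
  exact Finset.sum_congr rfl fun i _ => fderiv_component h _ i

lemma norm_sq_eq (v : E) : ‖v‖ ^ 2 = ∑ i, v i * v i := by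
  rw [EuclideanSpace.norm_sq_eq]
  exact Finset.sum_congr rfl fun i _ => by rw [Real.norm_eq_abs, sq_abs, sq]

lemma inner_eq (a b : E) : ⟪a, b⟫ = ∑ i, a i * b i := by
  simp [PiLp.inner_apply, RCLike.inner_apply]
  exact Finset.sum_congr rfl fun i _ => mul_comm _ _







lemma pd_mul {F G : ℝ × E → ℝ} (hF : ContDiff ℝ (⊤ : ℕ∞) F) (hG : ContDiff ℝ (⊤ : ℕ∞) G)
    (P : ℝ × E) (v : ℝ × E) :
    fderiv ℝ (fun p => F p * G p) P v
      = fderiv ℝ F P v * G P + F P * fderiv ℝ G P v := by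
  rw [fderiv_fun_mul (hF.differentiable (by simp) P) (hG.differentiable (by simp) P)]
  simp [smul_eq_mul]
  ring

lemma pd_add {F G : ℝ × E → ℝ} (hF : ContDiff ℝ (⊤ : ℕ∞) F) (hG : ContDiff ℝ (⊤ : ℕ∞) G)
    (P : ℝ × E) (v : ℝ × E) :
    fderiv ℝ (fun p => F p + G p) P v = fderiv ℝ F P v + fderiv ℝ G P v := by
  rw [fderiv_fun_add (hF.differentiable (by simp) P) (hG.differentiable (by simp) P)]
  simp

lemma pd_sub {F G : ℝ × E → ℝ} (hF : ContDiff ℝ (⊤ : ℕ∞) F) (hG : ContDiff ℝ (⊤ : ℕ∞) G)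
    (P : ℝ × E) (v : ℝ × E) :
    fderiv ℝ (fun p => F p - G p) P v = fderiv ℝ F P v - fderiv ℝ G P v := by
  rw [fderiv_fun_sub (hF.differentiable (by simp) P) (hG.differentiable (by simp) P)]
  simp

lemma pd_sum {ι : Type*} (s : Finset ι) {F : ι → ℝ × E → ℝ}
    (hF : ∀ i, ContDiff ℝ (⊤ : ℕ∞) (F i)) (P : ℝ × E) (v : ℝ × E) :
    fderiv ℝ (fun p => ∑ i ∈ s, F i p) P v = ∑ i ∈ s, fderiv ℝ (F i) P v := by
  rw [fderiv_fun_sum (fun i _ => (hF i).differentiable (by simp) P)]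
  simp

lemma pd_const_mul {F : ℝ × E → ℝ} (hF : ContDiff ℝ (⊤ : ℕ∞) F) (c : ℝ) (P : ℝ × E) (v : ℝ × E) :
    fderiv ℝ (fun p => c * F p) P v = c * fderiv ℝ F P v := by
  rw [fderiv_const_mul (hF.differentiable (by simp) P)]
  simp

lemma pd_div_const {F : ℝ × E → ℝ} (hF : ContDiff ℝ (⊤ : ℕ∞) F) (c : ℝ) (P : ℝ × E) (v : ℝ × E) :
    fderiv ℝ (fun p => F p / c) P v = fderiv ℝ F P v / c := by
  simp only [div_eq_mul_inv]
  rw [fderiv_mul_const (hF.differentiable (by simp) P)]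
  simp [mul_comm]




lemma grad_slice {φ : ℝ → E → ℝ} (hφ : ContDiff ℝ (⊤ : ℕ∞) (jfun φ)) (s : ℝ) (y : E) (i : Fin d) :
    gradient (φ s) y i = fderiv ℝ (jfun φ) (s, y) ((0:ℝ), EuclideanSpace.single i 1) := by
  rw [gradient_component]
  exact slice_fderiv hφ s y _

lemma wcomp {φ : ℝ → E → ℝ} (hφ : ContDiff ℝ (⊤ : ℕ∞) (jfun φ)) (t : ℝ) (y : E) (i : Fin d) :
    deriv (fun s => gradient (φ s) y) t i
      = fderiv ℝ (fun p => fderiv ℝ (jfun φ) p ((0:ℝ), EuclideanSpace.single i 1)) (t, y)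
          ((1:ℝ), (0:E)) := by
  have hcomp : ∀ j : Fin d, (fun s => gradient (φ s) y j)
      = fun s => fderiv ℝ (jfun φ) (s, y) ((0:ℝ), EuclideanSpace.single j 1) :=
    fun j => funext fun s => grad_slice hφ s y j
  have hdiffc : ∀ j : Fin d, DifferentiableAt ℝ (fun s => gradient (φ s) y j) t := by
    intro j
    rw [hcomp j]
    exact (slice_hasDerivAt (contDiff_pd hφ _) t y).differentiableAt
  have hdiff : DifferentiableAt ℝ (fun s => gradient (φ s) y) t :=
    differentiableAt_euclidean.2 hdiffc
  rw [deriv_component hdiff i, hcomp i]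
  exact (slice_hasDerivAt (contDiff_pd hφ _) t y).deriv

lemma vdiv_slice {v : E → E} {G : Fin d → ℝ × E → ℝ} (t : ℝ) (x : E)
    (hG : ∀ i, ContDiff ℝ (⊤ : ℕ∞) (G i))
    (hcomp : ∀ i, (fun y => v y i) = fun y => G i (t, y)) :
    vdiv v x = ∑ i, fderiv ℝ (G i) (t, x) ((0:ℝ), EuclideanSpace.single i 1) := by
  have hdv : DifferentiableAt ℝ v x := differentiableAt_euclidean.2 fun i => by
    rw [hcomp i]; exact slice_diff (hG i) t x
  rw [vdiv_eq_sum hdv]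
  exact Finset.sum_congr rfl fun i _ => by rw [hcomp i, slice_fderiv (hG i) t x]

end aux


lemma key_algebra {d : ℕ} (eps r rt ex φ0 φt Λ0 : ℝ)
    (uv ut φx φtx φtxx rx qv qxx Λx : Fin d → ℝ) (uxx : Fin d → Fin d → ℝ)
    (hmass : rt + ∑ i, (rx i * uv i + r * uxx i i - qxx i) = 0)
    (hmom : ∀ i, rt * uv i + r * ut i
        + ∑ j, (uxx i j * (r * uv j - qv j) + uv i * (rx j * uv j + r * uxx j j - qxx j))
      = -(r * φx i) + Λx i)
    (hpois : -eps ^ 2 * ∑ i, φtxx i = rt - ex * φt) :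
    (eps ^ 2 * ∑ i, φtx i * φx i) + φ0 * ex * φt
        + (1 / 2 * rt) * (∑ i, uv i * uv i) + r * (∑ i, ut i * uv i)
      + ∑ i, ((φx i + ∑ j, uv j * uxx j i) * (r * uv i - qv i)
          + (φ0 + (∑ j, uv j * uv j) / 2) * (rx i * uv i + r * uxx i i - qxx i)
          - eps ^ 2 * (φtx i * φx i + φ0 * φtxx i)
          - (Λx i * uv i + Λ0 * uxx i i))
      = -(∑ i, qv i * φx i) - (∑ i, uxx i i) * Λ0 := by
  -- summed momentum equation
  have hSum : ∑ i, uv i * (rt * uv i + r * ut i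
        + ∑ j, (uxx i j * (r * uv j - qv j) + uv i * (rx j * uv j + r * uxx j j - qxx j)))
      = ∑ i, uv i * (-(r * φx i) + Λx i) :=
    Finset.sum_congr rfl fun i _ => by rw [hmom i]
  -- reshape LHS of hSum
  have e1 : ∀ i : Fin d, uv i * (rt * uv i + r * ut i
        + ∑ j, (uxx i j * (r * uv j - qv j) + uv i * (rx j * uv j + r * uxx j j - qxx j)))
      = rt * (uv i * uv i) + r * (ut i * uv i)
        + (∑ j, (uv i * uxx i j) * (r * uv j - qv j))
        + (uv i * uv i) * (∑ j, (rx j * uv j + r * uxx j j - qxx j)) := by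
    intro i
    rw [Finset.sum_add_distrib]
    rw [show (∑ j, uv i * (rx j * uv j + r * uxx j j - qxx j))
        = uv i * ∑ j, (rx j * uv j + r * uxx j j - qxx j) from (Finset.mul_sum _ _ _).symm]
    rw [show (∑ j, (uv i * uxx i j) * (r * uv j - qv j))
        = uv i * ∑ j, uxx i j * (r * uv j - qv j) from by
      rw [Finset.mul_sum]; exact Finset.sum_congr rfl fun j _ => by ring]
    ring
  rw [Finset.sum_congr rfl fun i _ => e1 i] at hSum
  rw [Finset.sum_add_distrib, Finset.sum_add_distrib, Finset.sum_add_distrib] at hSum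
  rw [show (∑ i, rt * (uv i * uv i)) = rt * ∑ i, uv i * uv i from (Finset.mul_sum _ _ _).symm] at hSum
  rw [show (∑ i, r * (ut i * uv i)) = r * ∑ i, ut i * uv i from (Finset.mul_sum _ _ _).symm] at hSum
  rw [show (∑ i, (uv i * uv i) * (∑ j, (rx j * uv j + r * uxx j j - qxx j)))
      = (∑ i, uv i * uv i) * (∑ j, (rx j * uv j + r * uxx j j - qxx j)) from
    (Finset.sum_mul _ _ _).symm] at hSum
  -- swap the double sum
  rw [show (∑ i, ∑ j, (uv i * uxx i j) * (r * uv j - qv j))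
      = ∑ i, (∑ j, uv j * uxx j i) * (r * uv i - qv i) from by
    rw [Finset.sum_comm]
    exact Finset.sum_congr rfl fun i _ => by rw [Finset.sum_mul]] at hSum
  -- reshape RHS of hSum
  rw [show (∑ i, uv i * (-(r * φx i) + Λx i))
      = -(r * ∑ i, uv i * φx i) + ∑ i, uv i * Λx i from by
    rw [show (∑ i, uv i * (-(r * φx i) + Λx i))
        = ∑ i, (-(r * (uv i * φx i)) + uv i * Λx i) from
      Finset.sum_congr rfl fun i _ => by ring,
      Finset.sum_add_distrib, Finset.sum_neg_distrib, Finset.mul_sum]] at hSum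
  -- reshape the flux divergence sum in the goal
  rw [show (∑ i, ((φx i + ∑ j, uv j * uxx j i) * (r * uv i - qv i)
          + (φ0 + (∑ j, uv j * uv j) / 2) * (rx i * uv i + r * uxx i i - qxx i)
          - eps ^ 2 * (φtx i * φx i + φ0 * φtxx i)
          - (Λx i * uv i + Λ0 * uxx i i)))
      = ∑ i, (r * (uv i * φx i) - qv i * φx i + (∑ j, uv j * uxx j i) * (r * uv i - qv i)
          + (φ0 + (∑ j, uv j * uv j) / 2) * (rx i * uv i + r * uxx i i - qxx i)
          - eps ^ 2 * (φtx i * φx i) - (eps ^ 2 * φ0) * φtxx i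
          - uv i * Λx i - Λ0 * uxx i i) from
    Finset.sum_congr rfl fun i _ => by ring]
  rw [Finset.sum_sub_distrib, Finset.sum_sub_distrib, Finset.sum_sub_distrib,
    Finset.sum_sub_distrib, Finset.sum_add_distrib, Finset.sum_add_distrib,
    Finset.sum_sub_distrib]
  rw [show (∑ i, r * (uv i * φx i)) = r * ∑ i, uv i * φx i from (Finset.mul_sum _ _ _).symm]
  rw [show (∑ i, (φ0 + (∑ j, uv j * uv j) / 2) * (rx i * uv i + r * uxx i i - qxx i))
      = (φ0 + (∑ j, uv j * uv j) / 2) * ∑ i, (rx i * uv i + r * uxx i i - qxx i) from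
    (Finset.mul_sum _ _ _).symm]
  rw [show (∑ i, eps ^ 2 * (φtx i * φx i)) = eps ^ 2 * ∑ i, φtx i * φx i from
    (Finset.mul_sum _ _ _).symm]
  rw [show (∑ i, (eps ^ 2 * φ0) * φtxx i) = (eps ^ 2 * φ0) * ∑ i, φtxx i from
    (Finset.mul_sum _ _ _).symm]
  rw [show (∑ i, Λ0 * uxx i i) = Λ0 * ∑ i, uxx i i from (Finset.mul_sum _ _ _).symm]
  linear_combination hSum + (φ0 - (∑ i, uv i * uv i) / 2) * hmass + φ0 * hpois


/-- Total energy identity for classical solutions of the stabilised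
Euler-Poisson-Boltzmann system. -/
theorem stabilised_EPB_total_energy_identity {d : ℕ}
    (T ε : ℝ) (hT : 0 < T) (hε : 0 < ε)
    (Ω : Set (EuclideanSpace ℝ (Fin d))) (hΩo : IsOpen Ω) (hΩb : Bornology.IsBounded Ω)
    (ρ φ Λ : ℝ → EuclideanSpace ℝ (Fin d) → ℝ)
    (u q : ℝ → EuclideanSpace ℝ (Fin d) → EuclideanSpace ℝ (Fin d))
    (hρ : ContDiff ℝ (⊤ : ℕ∞) fun p : ℝ × EuclideanSpace ℝ (Fin d) => ρ p.1 p.2)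
    (hu : ContDiff ℝ (⊤ : ℕ∞) fun p : ℝ × EuclideanSpace ℝ (Fin d) => u p.1 p.2)
    (hφ : ContDiff ℝ (⊤ : ℕ∞) fun p : ℝ × EuclideanSpace ℝ (Fin d) => φ p.1 p.2)
    (hq : ContDiff ℝ (⊤ : ℕ∞) fun p : ℝ × EuclideanSpace ℝ (Fin d) => q p.1 p.2)
    (hΛ : ContDiff ℝ (⊤ : ℕ∞) fun p : ℝ × EuclideanSpace ℝ (Fin d) => Λ p.1 p.2)
    (hpos : ∀ t x, 0 < ρ t x)
    (hmass : ∀ t ∈ Set.Ioo 0 T, ∀ x ∈ Ω,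
      deriv (fun s => ρ s x) t + vdiv (fun y => ρ t y • u t y - q t y) x = 0)
    (hmom : ∀ t ∈ Set.Ioo 0 T, ∀ x ∈ Ω, ∀ i : Fin d,
      deriv (fun s => ρ s x * u s x i) t
        + vdiv (fun y => u t y i • (ρ t y • u t y - q t y)) x
      = -(ρ t x * gradient (φ t) x i) + gradient (Λ t) x i)
    (hpoisson : ∀ t ∈ Set.Ioo 0 T, ∀ x ∈ Ω,
      -ε ^ 2 * vdiv (fun y => gradient (φ t) y) x = ρ t x - Real.exp (φ t x)) :
    ∀ t ∈ Set.Ioo 0 T, ∀ x ∈ Ω,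
      deriv (fun s => ε ^ 2 / 2 * ‖gradient (φ s) x‖ ^ 2
          + (φ s x - 1) * Real.exp (φ s x)
          + (1 / 2) * ρ s x * ‖u s x‖ ^ 2) t
        + vdiv (fun y =>
            (φ t y + ‖u t y‖ ^ 2 / 2) • (ρ t y • u t y - q t y)
              - (ε ^ 2 * φ t y) • deriv (fun s => gradient (φ s) y) t
              - Λ t y • u t y) x
      = -⟪q t x, gradient (φ t) x⟫ - vdiv (fun y => u t y) x * Λ t x := by
  intro t ht x hx
  have hρ' : ContDiff ℝ (⊤ : ℕ∞) (jfun ρ) := hρ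
  have hφ' : ContDiff ℝ (⊤ : ℕ∞) (jfun φ) := hφ
  have hΛ' : ContDiff ℝ (⊤ : ℕ∞) (jfun Λ) := hΛ
  have hui : ∀ i : Fin d, ContDiff ℝ (⊤ : ℕ∞) (jc u i) := fun i => contDiff_euclidean.1 hu i
  have hqi : ∀ i : Fin d, ContDiff ℝ (⊤ : ℕ∞) (jc q i) := fun i => contDiff_euclidean.1 hq i
  -- mass equation in coordinates
  have hmass1 : vdiv (fun y => ρ t y • u t y - q t y) x
      = ∑ i, fderiv ℝ (fun p : ℝ × EuclideanSpace ℝ (Fin d) => jfun ρ p * jc u i p - jc q i p) (t, x) ((0:ℝ), EuclideanSpace.single i 1) :=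
    vdiv_slice t x (fun i => (hρ'.mul (hui i)).sub (hqi i)) (fun i => funext fun y => rfl)
  have hmass2 : ∀ i : Fin d,
      fderiv ℝ (fun p : ℝ × EuclideanSpace ℝ (Fin d) => jfun ρ p * jc u i p - jc q i p) (t, x) ((0:ℝ), EuclideanSpace.single i 1)
      = fderiv ℝ (jfun ρ) (t, x) ((0:ℝ), EuclideanSpace.single i 1) * u t x i + ρ t x * fderiv ℝ (jc u i) (t, x) ((0:ℝ), EuclideanSpace.single i 1) - fderiv ℝ (jc q i) (t, x) ((0:ℝ), EuclideanSpace.single i 1) := by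
    intro i
    rw [pd_sub (hρ'.mul (hui i)) (hqi i), pd_mul hρ' (hui i)]
    simp only [jfun_apply, jc_apply]
  have hmassD : deriv (fun s => ρ s x) t = fderiv ℝ (jfun ρ) (t, x) ((1:ℝ), (0:EuclideanSpace ℝ (Fin d))) := (slice_hasDerivAt hρ' t x).deriv
  have hmass' : fderiv ℝ (jfun ρ) (t, x) ((1:ℝ), (0:EuclideanSpace ℝ (Fin d))) + ∑ i, (fderiv ℝ (jfun ρ) (t, x) ((0:ℝ), EuclideanSpace.single i 1) * u t x i + ρ t x * fderiv ℝ (jc u i) (t, x) ((0:ℝ), EuclideanSpace.single i 1) - fderiv ℝ (jc q i) (t, x) ((0:ℝ), EuclideanSpace.single i 1)) = 0 := by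
    have h0 := hmass t ht x hx
    rw [hmassD, hmass1, Finset.sum_congr rfl (fun i _ => hmass2 i)] at h0
    exact h0
  -- momentum equation in coordinates
  have hmom1 : ∀ i : Fin d, vdiv (fun y => u t y i • (ρ t y • u t y - q t y)) x
      = ∑ j, fderiv ℝ (fun p : ℝ × EuclideanSpace ℝ (Fin d) => jc u i p * (jfun ρ p * jc u j p - jc q j p)) (t, x) ((0:ℝ), EuclideanSpace.single j 1) :=
    fun i => vdiv_slice t x (fun j => (hui i).mul ((hρ'.mul (hui j)).sub (hqi j)))
      (fun j => funext fun y => rfl)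
  have hmom2 : ∀ i j : Fin d,
      fderiv ℝ (fun p : ℝ × EuclideanSpace ℝ (Fin d) => jc u i p * (jfun ρ p * jc u j p - jc q j p)) (t, x) ((0:ℝ), EuclideanSpace.single j 1)
      = fderiv ℝ (jc u i) (t, x) ((0:ℝ), EuclideanSpace.single j 1) * (ρ t x * u t x j - q t x j)
        + u t x i * (fderiv ℝ (jfun ρ) (t, x) ((0:ℝ), EuclideanSpace.single j 1) * u t x j + ρ t x * fderiv ℝ (jc u j) (t, x) ((0:ℝ), EuclideanSpace.single j 1) - fderiv ℝ (jc q j) (t, x) ((0:ℝ), EuclideanSpace.single j 1)) := by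
    intro i j
    rw [pd_mul (hui i) ((hρ'.mul (hui j)).sub (hqi j)), pd_sub (hρ'.mul (hui j)) (hqi j),
      pd_mul hρ' (hui j)]
    simp only [jfun_apply, jc_apply]
  have hmomD : ∀ i : Fin d, deriv (fun s => ρ s x * u s x i) t
      = fderiv ℝ (jfun ρ) (t, x) ((1:ℝ), (0:EuclideanSpace ℝ (Fin d))) * u t x i + ρ t x * fderiv ℝ (jc u i) (t, x) ((1:ℝ), (0:EuclideanSpace ℝ (Fin d))) :=
    fun i => ((slice_hasDerivAt hρ' t x).mul (slice_hasDerivAt (hui i) t x)).deriv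
  have hgradφ : ∀ i : Fin d, gradient (φ t) x i = fderiv ℝ (jfun φ) (t, x) ((0:ℝ), EuclideanSpace.single i 1) := fun i => grad_slice hφ' t x i
  have hgradΛ : ∀ i : Fin d, gradient (Λ t) x i = fderiv ℝ (jfun Λ) (t, x) ((0:ℝ), EuclideanSpace.single i 1) := fun i => grad_slice hΛ' t x i
  have hmom' : ∀ i : Fin d, fderiv ℝ (jfun ρ) (t, x) ((1:ℝ), (0:EuclideanSpace ℝ (Fin d))) * u t x i + ρ t x * fderiv ℝ (jc u i) (t, x) ((1:ℝ), (0:EuclideanSpace ℝ (Fin d)))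
      + ∑ j, (fderiv ℝ (jc u i) (t, x) ((0:ℝ), EuclideanSpace.single j 1) * (ρ t x * u t x j - q t x j)
          + u t x i * (fderiv ℝ (jfun ρ) (t, x) ((0:ℝ), EuclideanSpace.single j 1) * u t x j + ρ t x * fderiv ℝ (jc u j) (t, x) ((0:ℝ), EuclideanSpace.single j 1) - fderiv ℝ (jc q j) (t, x) ((0:ℝ), EuclideanSpace.single j 1)))
      = -(ρ t x * fderiv ℝ (jfun φ) (t, x) ((0:ℝ), EuclideanSpace.single i 1)) + fderiv ℝ (jfun Λ) (t, x) ((0:ℝ), EuclideanSpace.single i 1) := by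
    intro i
    have h0 := hmom t ht x hx i
    rw [hmomD i, hmom1 i, hgradφ i, hgradΛ i,
      Finset.sum_congr rfl (fun j _ => hmom2 i j)] at h0
    exact h0
  -- time-differentiated Poisson equation
  have hlapG : ∀ i : Fin d, ContDiff ℝ (⊤ : ℕ∞) (fun p => fderiv ℝ (jfun φ) p ((0:ℝ), EuclideanSpace.single i 1)) := fun i => contDiff_pd hφ' _
  have hlap : ∀ s : ℝ, vdiv (fun y => gradient (φ s) y) x
      = ∑ i, fderiv ℝ (fun p => fderiv ℝ (jfun φ) p ((0:ℝ), EuclideanSpace.single i 1)) (s, x) ((0:ℝ), EuclideanSpace.single i 1) :=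
    fun s => vdiv_slice s x hlapG (fun i => funext fun y => grad_slice hφ' s y i)
  have hevent : (fun s => -ε ^ 2 * ∑ i, fderiv ℝ (fun p => fderiv ℝ (jfun φ) p ((0:ℝ), EuclideanSpace.single i 1)) (s, x) ((0:ℝ), EuclideanSpace.single i 1))
      =ᶠ[nhds t] (fun s => ρ s x - Real.exp (φ s x)) := by
    filter_upwards [isOpen_Ioo.mem_nhds ht] with s hs
    rw [← hlap s]
    exact hpoisson s hs x hx
  have hL : HasDerivAt (fun s => -ε ^ 2 * ∑ i, fderiv ℝ (fun p => fderiv ℝ (jfun φ) p ((0:ℝ), EuclideanSpace.single i 1)) (s, x) ((0:ℝ), EuclideanSpace.single i 1))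
      (-ε ^ 2 * ∑ i, fderiv ℝ (fun p => fderiv ℝ (fun p => fderiv ℝ (jfun φ) p ((0:ℝ), EuclideanSpace.single i 1)) p ((0:ℝ), EuclideanSpace.single i 1)) (t, x) ((1:ℝ), (0:EuclideanSpace ℝ (Fin d)))) t :=
    HasDerivAt.const_mul _ (HasDerivAt.fun_sum fun i _ =>
      slice_hasDerivAt (contDiff_pd (hlapG i) ((0:ℝ), EuclideanSpace.single i 1)) t x)
  have hR : HasDerivAt (fun s => ρ s x - Real.exp (φ s x))
      (fderiv ℝ (jfun ρ) (t, x) ((1:ℝ), (0:EuclideanSpace ℝ (Fin d))) - Real.exp (φ t x) * fderiv ℝ (jfun φ) (t, x) ((1:ℝ), (0:EuclideanSpace ℝ (Fin d)))) t :=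
    (slice_hasDerivAt hρ' t x).sub ((slice_hasDerivAt hφ' t x).exp)
  have hpois' : -ε ^ 2 * ∑ i, fderiv ℝ (fun p => fderiv ℝ (fun p => fderiv ℝ (jfun φ) p ((0:ℝ), EuclideanSpace.single i 1)) p ((0:ℝ), EuclideanSpace.single i 1)) (t, x) ((1:ℝ), (0:EuclideanSpace ℝ (Fin d))) = fderiv ℝ (jfun ρ) (t, x) ((1:ℝ), (0:EuclideanSpace ℝ (Fin d))) - Real.exp (φ t x) * fderiv ℝ (jfun φ) (t, x) ((1:ℝ), (0:EuclideanSpace ℝ (Fin d))) := by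
    have h0 := hevent.deriv_eq
    rw [hL.deriv, hR.deriv] at h0
    exact h0
  -- time derivative of the energy
  have hfun : (fun s => ε ^ 2 / 2 * ‖gradient (φ s) x‖ ^ 2
        + (φ s x - 1) * Real.exp (φ s x)
        + (1 / 2) * ρ s x * ‖u s x‖ ^ 2)
      = (fun s => ε ^ 2 / 2 * (∑ i, fderiv ℝ (jfun φ) (s, x) ((0:ℝ), EuclideanSpace.single i 1) * fderiv ℝ (jfun φ) (s, x) ((0:ℝ), EuclideanSpace.single i 1))
        + (φ s x - 1) * Real.exp (φ s x)
        + (1 / 2) * ρ s x * (∑ i, u s x i * u s x i)) := by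
    funext s
    rw [norm_sq_eq, norm_sq_eq,
      show (∑ i, gradient (φ s) x i * gradient (φ s) x i)
        = ∑ i, fderiv ℝ (jfun φ) (s, x) ((0:ℝ), EuclideanSpace.single i 1) * fderiv ℝ (jfun φ) (s, x) ((0:ℝ), EuclideanSpace.single i 1) from
      Finset.sum_congr rfl fun i _ => by rw [grad_slice hφ' s x i]]
  have hEder : HasDerivAt (fun s => ε ^ 2 / 2 * (∑ i, fderiv ℝ (jfun φ) (s, x) ((0:ℝ), EuclideanSpace.single i 1) * fderiv ℝ (jfun φ) (s, x) ((0:ℝ), EuclideanSpace.single i 1))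
        + (φ s x - 1) * Real.exp (φ s x)
        + (1 / 2) * ρ s x * (∑ i, u s x i * u s x i))
      (ε ^ 2 / 2 * (∑ i, (fderiv ℝ (fun p => fderiv ℝ (jfun φ) p ((0:ℝ), EuclideanSpace.single i 1)) (t, x) ((1:ℝ), (0:EuclideanSpace ℝ (Fin d))) * fderiv ℝ (jfun φ) (t, x) ((0:ℝ), EuclideanSpace.single i 1) + fderiv ℝ (jfun φ) (t, x) ((0:ℝ), EuclideanSpace.single i 1) * fderiv ℝ (fun p => fderiv ℝ (jfun φ) p ((0:ℝ), EuclideanSpace.single i 1)) (t, x) ((1:ℝ), (0:EuclideanSpace ℝ (Fin d)))))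
        + (fderiv ℝ (jfun φ) (t, x) ((1:ℝ), (0:EuclideanSpace ℝ (Fin d))) * Real.exp (φ t x) + (φ t x - 1) * (Real.exp (φ t x) * fderiv ℝ (jfun φ) (t, x) ((1:ℝ), (0:EuclideanSpace ℝ (Fin d)))))
        + (((1 / 2) * fderiv ℝ (jfun ρ) (t, x) ((1:ℝ), (0:EuclideanSpace ℝ (Fin d)))) * (∑ i, u t x i * u t x i)
            + ((1 / 2) * ρ t x) * (∑ i, (fderiv ℝ (jc u i) (t, x) ((1:ℝ), (0:EuclideanSpace ℝ (Fin d))) * u t x i + u t x i * fderiv ℝ (jc u i) (t, x) ((1:ℝ), (0:EuclideanSpace ℝ (Fin d))))))) t := by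
    exact ((HasDerivAt.fun_sum (fun i _ =>
        (slice_hasDerivAt (contDiff_pd hφ' ((0:ℝ), EuclideanSpace.single i 1)) t x).mul
          (slice_hasDerivAt (contDiff_pd hφ' ((0:ℝ), EuclideanSpace.single i 1)) t x))).const_mul (ε ^ 2 / 2) |>.add
      (((slice_hasDerivAt hφ' t x).sub_const 1).mul ((slice_hasDerivAt hφ' t x).exp)) |>.add
      (((slice_hasDerivAt hρ' t x).const_mul (1 / 2)).mul
        (HasDerivAt.fun_sum (fun i _ =>
          (slice_hasDerivAt (hui i) t x).mul (slice_hasDerivAt (hui i) t x)))))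
  have hE : deriv (fun s => ε ^ 2 / 2 * ‖gradient (φ s) x‖ ^ 2
        + (φ s x - 1) * Real.exp (φ s x)
        + (1 / 2) * ρ s x * ‖u s x‖ ^ 2) t
      = (ε ^ 2 * ∑ i, fderiv ℝ (fun p => fderiv ℝ (jfun φ) p ((0:ℝ), EuclideanSpace.single i 1)) (t, x) ((1:ℝ), (0:EuclideanSpace ℝ (Fin d))) * fderiv ℝ (jfun φ) (t, x) ((0:ℝ), EuclideanSpace.single i 1)) + φ t x * Real.exp (φ t x) * fderiv ℝ (jfun φ) (t, x) ((1:ℝ), (0:EuclideanSpace ℝ (Fin d)))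
        + (1 / 2 * fderiv ℝ (jfun ρ) (t, x) ((1:ℝ), (0:EuclideanSpace ℝ (Fin d)))) * (∑ i, u t x i * u t x i)
        + ρ t x * (∑ i, fderiv ℝ (jc u i) (t, x) ((1:ℝ), (0:EuclideanSpace ℝ (Fin d))) * u t x i) := by
    rw [hfun, hEder.deriv,
      show (∑ i, (fderiv ℝ (fun p => fderiv ℝ (jfun φ) p ((0:ℝ), EuclideanSpace.single i 1)) (t, x) ((1:ℝ), (0:EuclideanSpace ℝ (Fin d))) * fderiv ℝ (jfun φ) (t, x) ((0:ℝ), EuclideanSpace.single i 1) + fderiv ℝ (jfun φ) (t, x) ((0:ℝ), EuclideanSpace.single i 1) * fderiv ℝ (fun p => fderiv ℝ (jfun φ) p ((0:ℝ), EuclideanSpace.single i 1)) (t, x) ((1:ℝ), (0:EuclideanSpace ℝ (Fin d)))))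
        = 2 * ∑ i, fderiv ℝ (fun p => fderiv ℝ (jfun φ) p ((0:ℝ), EuclideanSpace.single i 1)) (t, x) ((1:ℝ), (0:EuclideanSpace ℝ (Fin d))) * fderiv ℝ (jfun φ) (t, x) ((0:ℝ), EuclideanSpace.single i 1) from by
        rw [Finset.mul_sum]; exact Finset.sum_congr rfl fun i _ => by ring,
      show (∑ i, (fderiv ℝ (jc u i) (t, x) ((1:ℝ), (0:EuclideanSpace ℝ (Fin d))) * u t x i + u t x i * fderiv ℝ (jc u i) (t, x) ((1:ℝ), (0:EuclideanSpace ℝ (Fin d)))))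
        = 2 * ∑ i, fderiv ℝ (jc u i) (t, x) ((1:ℝ), (0:EuclideanSpace ℝ (Fin d))) * u t x i from by
        rw [Finset.mul_sum]; exact Finset.sum_congr rfl fun i _ => by ring]
    ring
  -- divergence of the flux
  have hsum2 : ContDiff ℝ (⊤ : ℕ∞) (fun p : ℝ × EuclideanSpace ℝ (Fin d) => ∑ j, jc u j p * jc u j p) :=
    ContDiff.sum fun j _ => (hui j).mul (hui j)
  have hWJ : ∀ i : Fin d, ContDiff ℝ (⊤ : ℕ∞) (fun p => fderiv ℝ (fun p => fderiv ℝ (jfun φ) p ((0:ℝ), EuclideanSpace.single i 1)) p ((1:ℝ), (0:EuclideanSpace ℝ (Fin d)))) :=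
    fun i => contDiff_pd (contDiff_pd hφ' ((0:ℝ), EuclideanSpace.single i 1)) ((1:ℝ), (0:EuclideanSpace ℝ (Fin d)))
  have hGflux : ∀ i : Fin d, ContDiff ℝ (⊤ : ℕ∞) (fun p : ℝ × EuclideanSpace ℝ (Fin d) =>
      (jfun φ p + (∑ j, jc u j p * jc u j p) / 2) * (jfun ρ p * jc u i p - jc q i p)
        - ε ^ 2 * jfun φ p * (fun p => fderiv ℝ (fun p => fderiv ℝ (jfun φ) p ((0:ℝ), EuclideanSpace.single i 1)) p ((1:ℝ), (0:EuclideanSpace ℝ (Fin d)))) p - jfun Λ p * jc u i p) :=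
    fun i => (((hφ'.add (hsum2.div_const 2)).mul ((hρ'.mul (hui i)).sub (hqi i))).sub
      ((contDiff_const.mul hφ').mul (hWJ i))).sub (hΛ'.mul (hui i))
  have hflux_comp : ∀ i : Fin d, (fun y =>
      ((φ t y + ‖u t y‖ ^ 2 / 2) • (ρ t y • u t y - q t y)
        - (ε ^ 2 * φ t y) • deriv (fun s => gradient (φ s) y) t - Λ t y • u t y) i)
      = fun y => (jfun φ (t, y) + (∑ j, jc u j (t, y) * jc u j (t, y)) / 2)
          * (jfun ρ (t, y) * jc u i (t, y) - jc q i (t, y))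
        - ε ^ 2 * jfun φ (t, y) * (fun p => fderiv ℝ (fun p => fderiv ℝ (jfun φ) p ((0:ℝ), EuclideanSpace.single i 1)) p ((1:ℝ), (0:EuclideanSpace ℝ (Fin d)))) (t, y) - jfun Λ (t, y) * jc u i (t, y) := by
    intro i
    funext y
    simp only [PiLp.sub_apply, PiLp.smul_apply, smul_eq_mul, jfun_apply, jc_apply]
    rw [norm_sq_eq, wcomp hφ' t y i]
  have hdiv1 : vdiv (fun y =>
      (φ t y + ‖u t y‖ ^ 2 / 2) • (ρ t y • u t y - q t y)
        - (ε ^ 2 * φ t y) • deriv (fun s => gradient (φ s) y) t - Λ t y • u t y) x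
      = ∑ i, fderiv ℝ (fun p : ℝ × EuclideanSpace ℝ (Fin d) =>
          (jfun φ p + (∑ j, jc u j p * jc u j p) / 2) * (jfun ρ p * jc u i p - jc q i p)
            - ε ^ 2 * jfun φ p * (fun p => fderiv ℝ (fun p => fderiv ℝ (jfun φ) p ((0:ℝ), EuclideanSpace.single i 1)) p ((1:ℝ), (0:EuclideanSpace ℝ (Fin d)))) p - jfun Λ p * jc u i p) (t, x) ((0:ℝ), EuclideanSpace.single i 1) :=
    vdiv_slice t x hGflux hflux_comp
  have hdiv2 : ∀ i : Fin d, fderiv ℝ (fun p : ℝ × EuclideanSpace ℝ (Fin d) =>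
        (jfun φ p + (∑ j, jc u j p * jc u j p) / 2) * (jfun ρ p * jc u i p - jc q i p)
          - ε ^ 2 * jfun φ p * (fun p => fderiv ℝ (fun p => fderiv ℝ (jfun φ) p ((0:ℝ), EuclideanSpace.single i 1)) p ((1:ℝ), (0:EuclideanSpace ℝ (Fin d)))) p - jfun Λ p * jc u i p) (t, x) ((0:ℝ), EuclideanSpace.single i 1)
      = (fderiv ℝ (jfun φ) (t, x) ((0:ℝ), EuclideanSpace.single i 1) + ∑ j, u t x j * fderiv ℝ (jc u j) (t, x) ((0:ℝ), EuclideanSpace.single i 1)) * (ρ t x * u t x i - q t x i)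
        + (φ t x + (∑ j, u t x j * u t x j) / 2)
            * (fderiv ℝ (jfun ρ) (t, x) ((0:ℝ), EuclideanSpace.single i 1) * u t x i + ρ t x * fderiv ℝ (jc u i) (t, x) ((0:ℝ), EuclideanSpace.single i 1) - fderiv ℝ (jc q i) (t, x) ((0:ℝ), EuclideanSpace.single i 1))
        - ε ^ 2 * (fderiv ℝ (fun p => fderiv ℝ (jfun φ) p ((0:ℝ), EuclideanSpace.single i 1)) (t, x) ((1:ℝ), (0:EuclideanSpace ℝ (Fin d))) * fderiv ℝ (jfun φ) (t, x) ((0:ℝ), EuclideanSpace.single i 1) + φ t x * fderiv ℝ (fun p => fderiv ℝ (fun p => fderiv ℝ (jfun φ) p ((0:ℝ), EuclideanSpace.single i 1)) p ((0:ℝ), EuclideanSpace.single i 1)) (t, x) ((1:ℝ), (0:EuclideanSpace ℝ (Fin d))))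
        - (fderiv ℝ (jfun Λ) (t, x) ((0:ℝ), EuclideanSpace.single i 1) * u t x i + Λ t x * fderiv ℝ (jc u i) (t, x) ((0:ℝ), EuclideanSpace.single i 1)) := by
    intro i
    rw [pd_sub (((hφ'.add (hsum2.div_const 2)).mul ((hρ'.mul (hui i)).sub (hqi i))).sub
          ((contDiff_const.mul hφ').mul (hWJ i))) (hΛ'.mul (hui i)),
      pd_sub ((hφ'.add (hsum2.div_const 2)).mul ((hρ'.mul (hui i)).sub (hqi i)))
        ((contDiff_const.mul hφ').mul (hWJ i)),
      pd_mul (hφ'.add (hsum2.div_const 2)) ((hρ'.mul (hui i)).sub (hqi i)),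
      pd_add hφ' (hsum2.div_const 2),
      pd_div_const hsum2 2,
      pd_sum Finset.univ (fun j => (hui j).mul (hui j)),
      pd_sub (hρ'.mul (hui i)) (hqi i),
      pd_mul hρ' (hui i),
      pd_mul (contDiff_const.mul hφ') (hWJ i),
      pd_const_mul hφ' (ε ^ 2),
      pd_mul hΛ' (hui i),
      pd_swap (contDiff_pd hφ' ((0:ℝ), EuclideanSpace.single i 1)) (t, x) ((1:ℝ), (0:EuclideanSpace ℝ (Fin d))) ((0:ℝ), EuclideanSpace.single i 1)]
    simp only [jfun_apply, jc_apply]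
    rw [show (∑ j, fderiv ℝ (fun p : ℝ × EuclideanSpace ℝ (Fin d) => jc u j p * jc u j p) (t, x) ((0:ℝ), EuclideanSpace.single i 1))
        = 2 * ∑ j, u t x j * fderiv ℝ (jc u j) (t, x) ((0:ℝ), EuclideanSpace.single i 1) from by
      rw [Finset.mul_sum]
      exact Finset.sum_congr rfl fun j _ => by
        rw [pd_mul (hui j) (hui j)]; simp only [jc_apply]; ring]
    ring
  have hdiv : vdiv (fun y =>
      (φ t y + ‖u t y‖ ^ 2 / 2) • (ρ t y • u t y - q t y)
        - (ε ^ 2 * φ t y) • deriv (fun s => gradient (φ s) y) t - Λ t y • u t y) x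
      = ∑ i, ((fderiv ℝ (jfun φ) (t, x) ((0:ℝ), EuclideanSpace.single i 1) + ∑ j, u t x j * fderiv ℝ (jc u j) (t, x) ((0:ℝ), EuclideanSpace.single i 1)) * (ρ t x * u t x i - q t x i)
        + (φ t x + (∑ j, u t x j * u t x j) / 2)
            * (fderiv ℝ (jfun ρ) (t, x) ((0:ℝ), EuclideanSpace.single i 1) * u t x i + ρ t x * fderiv ℝ (jc u i) (t, x) ((0:ℝ), EuclideanSpace.single i 1) - fderiv ℝ (jc q i) (t, x) ((0:ℝ), EuclideanSpace.single i 1))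
        - ε ^ 2 * (fderiv ℝ (fun p => fderiv ℝ (jfun φ) p ((0:ℝ), EuclideanSpace.single i 1)) (t, x) ((1:ℝ), (0:EuclideanSpace ℝ (Fin d))) * fderiv ℝ (jfun φ) (t, x) ((0:ℝ), EuclideanSpace.single i 1) + φ t x * fderiv ℝ (fun p => fderiv ℝ (fun p => fderiv ℝ (jfun φ) p ((0:ℝ), EuclideanSpace.single i 1)) p ((0:ℝ), EuclideanSpace.single i 1)) (t, x) ((1:ℝ), (0:EuclideanSpace ℝ (Fin d))))
        - (fderiv ℝ (jfun Λ) (t, x) ((0:ℝ), EuclideanSpace.single i 1) * u t x i + Λ t x * fderiv ℝ (jc u i) (t, x) ((0:ℝ), EuclideanSpace.single i 1))) := by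
    rw [hdiv1]
    exact Finset.sum_congr rfl fun i _ => hdiv2 i
  -- right-hand side
  have hinner : ⟪q t x, gradient (φ t) x⟫ = ∑ i, q t x i * fderiv ℝ (jfun φ) (t, x) ((0:ℝ), EuclideanSpace.single i 1) := by
    rw [inner_eq]
    exact Finset.sum_congr rfl fun i _ => by rw [grad_slice hφ' t x i]
  have hdivu : vdiv (fun y => u t y) x = ∑ i, fderiv ℝ (jc u i) (t, x) ((0:ℝ), EuclideanSpace.single i 1) :=
    vdiv_slice t x (fun i => hui i) (fun i => funext fun y => rfl)
  rw [hE, hdiv, hinner, hdivu]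
  exact key_algebra ε (ρ t x) (fderiv ℝ (jfun ρ) (t, x) ((1:ℝ), (0:EuclideanSpace ℝ (Fin d)))) (Real.exp (φ t x)) (φ t x) (fderiv ℝ (jfun φ) (t, x) ((1:ℝ), (0:EuclideanSpace ℝ (Fin d)))) (Λ t x)
    (fun i => u t x i) (fun i => fderiv ℝ (jc u i) (t, x) ((1:ℝ), (0:EuclideanSpace ℝ (Fin d)))) (fun i => fderiv ℝ (jfun φ) (t, x) ((0:ℝ), EuclideanSpace.single i 1)) (fun i => fderiv ℝ (fun p => fderiv ℝ (jfun φ) p ((0:ℝ), EuclideanSpace.single i 1)) (t, x) ((1:ℝ), (0:EuclideanSpace ℝ (Fin d))))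
    (fun i => fderiv ℝ (fun p => fderiv ℝ (fun p => fderiv ℝ (jfun φ) p ((0:ℝ), EuclideanSpace.single i 1)) p ((0:ℝ), EuclideanSpace.single i 1)) (t, x) ((1:ℝ), (0:EuclideanSpace ℝ (Fin d)))) (fun i => fderiv ℝ (jfun ρ) (t, x) ((0:ℝ), EuclideanSpace.single i 1)) (fun i => q t x i) (fun i => fderiv ℝ (jc q i) (t, x) ((0:ℝ), EuclideanSpace.single i 1))
    (fun i => fderiv ℝ (jfun Λ) (t, x) ((0:ℝ), EuclideanSpace.single i 1)) (fun i j => fderiv ℝ (jc u i) (t, x) ((0:ℝ), EuclideanSpace.single j 1))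
    hmass' hmom' hpois'
end

section
/- Discrete comparison principle for the Poisson-Boltzmann equation: let φ, φ' : M → ℝ solve the finite-volume scheme -ε²(Δ_M φ)_K + e^{φ_K} = ρ_K and -ε²(Δ_M φ')_K + e^{φ'_K} = ρ'_K on every primal cell K with homogeneous discrete Neumann boundary conditions. If ρ_K ≤ ρ'_K for all K, then φ_K ≤ φ'_K for all K. -/
/-- An abstract finite MAC mesh: primal cells, internal edges `σ = K|L` with the
two adjacent cells `left σ` and `right σ`, positive cell volumes `vol K = |K|`
and positive edge weights `w σ = |σ|²/|D_σ|`.  Boundary edges carry a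
homogeneous discrete Neumann condition and hence do not contribute to the
discrete Laplacian; they are therefore omitted. -/
structure DiscMesh where
  Cell : Type
  Edge : Type
  [cellFin : Fintype Cell]
  [edgeFin : Fintype Edge]
  [cellDec : DecidableEq Cell]
  left : Edge → Cell
  right : Edge → Cell
  edge_ne : ∀ σ, left σ ≠ right σ
  vol : Cell → ℝ
  w : Edge → ℝ
  vol_pos : ∀ K, 0 < vol K
  w_pos : ∀ σ, 0 < w σ

attribute [instance] DiscMesh.cellFin DiscMesh.edgeFin DiscMesh.cellDec

/-- The discrete Laplacian
`(Δ_M φ)_K = (1/|K|) Σ_{σ=K|L∈E(K)} (|σ|²/|D_σ|)(φ_L - φ_K)` with zero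
contribution from boundary edges (homogeneous discrete Neumann condition). -/
noncomputable def discLap (M : DiscMesh) (φ : M.Cell → ℝ) (K : M.Cell) : ℝ :=
  (1 / M.vol K) * ∑ σ : M.Edge,
    ((if M.left σ = K then M.w σ * (φ (M.right σ) - φ K) else 0)
      + (if M.right σ = K then M.w σ * (φ (M.left σ) - φ K) else 0))

/-- Discrete comparison principle for the Poisson–Boltzmann equation. -/
theorem discrete_PB_comparison (M : DiscMesh) (ε : ℝ) (hε : 0 < ε)
    (φ φ' ρ ρ' : M.Cell → ℝ)
    (hφ : ∀ K, -ε ^ 2 * discLap M φ K + Real.exp (φ K) = ρ K)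
    (hφ' : ∀ K, -ε ^ 2 * discLap M φ' K + Real.exp (φ' K) = ρ' K)
    (hρ : ∀ K, ρ K ≤ ρ' K) :
    ∀ K, φ K ≤ φ' K := by
  intro K
  by_contra h
  push_neg at h
  obtain ⟨K₀, -, hK₀⟩ := Finset.exists_max_image Finset.univ (fun L => φ L - φ' L)
    ⟨K, Finset.mem_univ K⟩
  have hmax : ∀ L, φ L - φ' L ≤ φ K₀ - φ' K₀ := fun L => hK₀ L (Finset.mem_univ L)
  have hpos : 0 < φ K₀ - φ' K₀ := lt_of_lt_of_le (by linarith) (hmax K)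
  have hexp : Real.exp (φ' K₀) < Real.exp (φ K₀) := Real.exp_lt_exp.mpr (by linarith)
  have hlap : discLap M φ K₀ - discLap M φ' K₀ ≤ 0 := by
    have h1 : discLap M φ K₀ - discLap M φ' K₀
        = (1 / M.vol K₀) * ∑ σ : M.Edge,
          ((if M.left σ = K₀ then
              M.w σ * ((φ (M.right σ) - φ' (M.right σ)) - (φ K₀ - φ' K₀)) else 0)
            + (if M.right σ = K₀ then
              M.w σ * ((φ (M.left σ) - φ' (M.left σ)) - (φ K₀ - φ' K₀)) else 0)) := by
      unfold discLap
      rw [← mul_sub, ← Finset.sum_sub_distrib]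
      congr 1
      apply Finset.sum_congr rfl
      intro σ _
      by_cases h1 : M.left σ = K₀ <;> by_cases h2 : M.right σ = K₀ <;>
        simp [h1, h2] <;> ring
    rw [h1]
    apply mul_nonpos_of_nonneg_of_nonpos
    · exact one_div_nonneg.mpr (M.vol_pos K₀).le
    apply Finset.sum_nonpos
    intro σ _
    have hR := hmax (M.right σ)
    have hL := hmax (M.left σ)
    have hw := (M.w_pos σ).le
    apply add_nonpos <;> split_ifs <;>
      first
        | exact le_refl 0
        | exact mul_nonpos_of_nonneg_of_nonpos hw (by linarith)
  have hε2 : (0:ℝ) < ε ^ 2 := by positivity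
  have h3 : ε ^ 2 * (discLap M φ K₀ - discLap M φ' K₀) ≤ 0 :=
    mul_nonpos_of_nonneg_of_nonpos hε2.le hlap
  have e1 := hφ K₀
  have e2 := hφ' K₀
  have e3 := hρ K₀
  nlinarith [h3, e1, e2, e3, hexp]
end

section
/- Discrete existence for the Poisson-Boltzmann equation: given a strictly positive discrete density ρ : M → ℝ with ρ_K > 0 for all K, there exists φ : M → ℝ solving -ε²(Δ_M φ)_K + e^{φ_K} = ρ_K for all K ∈ M with homogeneous discrete Neumann boundary conditions. -/
/-!
The equation is the Euler–Lagrange equation of the energy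
`E(φ) = ε²/2 Σ_σ w_σ (φ_L - φ_K)² + Σ_K |K| (e^{φ_K} - ρ_K φ_K)`.
Since `ρ_K > 0`, each `x ↦ eˣ - ρ_K x` tends to `+∞` in both directions, so `E` is coercive on
the finite-dimensional space `ℝ^M` and attains its minimum. Differentiating `E` at the minimizer
in the direction of the indicator of a cell `K`, the discrete Green formula turns the Dirichlet
part into `-|K| ε² (Δ_M φ)_K`, which gives the equation at `K`.
-/

open Filter

theorem Real.tendsto_exp_sub_mul_cocompact {r : ℝ} (hr : 0 < r) :
    Tendsto (fun x => Real.exp x - r * x) (cocompact ℝ) atTop := by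
  have hc : 0 < min r 1 := lt_min hr one_pos
  have key : ∀ x, min r 1 * |x| - r ^ 2 / 2 ≤ Real.exp x - r * x := by
    intro x
    rcases le_total 0 x with hx | hx
    · rw [abs_of_nonneg hx]
      nlinarith [Real.quadratic_le_exp_of_nonneg hx, sq_nonneg (x - r), min_le_right r 1]
    · rw [abs_of_nonpos hx]
      nlinarith [Real.exp_pos x, min_le_left r 1]
  refine tendsto_atTop_mono key (tendsto_atTop_add_const_right _ _ ?_)
  simpa only [Real.norm_eq_abs] using (tendsto_norm_cocompact_atTop (E := ℝ)).const_mul_atTop hc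

theorem tendsto_sum_apply_cocompact_atTop {ι X : Type*} [Fintype ι] [TopologicalSpace X]
    [Nonempty X] {g : ι → X → ℝ} (hcont : ∀ i, Continuous (g i))
    (hg : ∀ i, Tendsto (g i) (cocompact X) atTop) :
    Tendsto (fun x : ι → X => ∑ i, g i (x i)) (cocompact (ι → X)) atTop := by
  classical
  choose m hm using fun i => (hcont i).exists_forall_le (hg i)
  rw [← Filter.coprodᵢ_cocompact, Filter.coprodᵢ, tendsto_iSup]
  intro i
  have hbound : ∀ x : ι → X,
      g i (x i) + ∑ j ∈ Finset.univ.erase i, g j (m j) ≤ ∑ j, g j (x j) := by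
    intro x
    rw [← Finset.add_sum_erase _ _ (Finset.mem_univ i)]
    gcongr with j
    exact hm j (x j)
  exact tendsto_atTop_mono hbound
    (tendsto_atTop_add_const_right _ _ ((hg i).comp tendsto_comap))

namespace DiscMesh

variable (M : DiscMesh)

noncomputable def pbEnergy (ε : ℝ) (ρ φ : M.Cell → ℝ) : ℝ :=
  ε ^ 2 / 2 * ∑ σ, M.w σ * (φ (M.right σ) - φ (M.left σ)) ^ 2
    + ∑ K, M.vol K * (Real.exp (φ K) - ρ K * φ K)

theorem continuous_pbEnergy (ε : ℝ) (ρ : M.Cell → ℝ) : Continuous (M.pbEnergy ε ρ) := by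
  unfold pbEnergy
  fun_prop

theorem tendsto_pbEnergy_cocompact (ε : ℝ) {ρ : M.Cell → ℝ} (hρ : ∀ K, 0 < ρ K) :
    Tendsto (M.pbEnergy ε ρ) (cocompact (M.Cell → ℝ)) atTop := by
  have hdirichlet : ∀ φ : M.Cell → ℝ,
      0 ≤ ε ^ 2 / 2 * ∑ σ, M.w σ * (φ (M.right σ) - φ (M.left σ)) ^ 2 := fun φ =>
    mul_nonneg (by positivity)
      (Finset.sum_nonneg fun σ _ => mul_nonneg (M.w_pos σ).le (sq_nonneg _))
  refine tendsto_atTop_mono (fun φ => le_add_of_nonneg_left (hdirichlet φ)) ?_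
  exact tendsto_sum_apply_cocompact_atTop (fun K => by fun_prop) fun K =>
    (Real.tendsto_exp_sub_mul_cocompact (hρ K)).const_mul_atTop (M.vol_pos K)

theorem exists_forall_pbEnergy_le (ε : ℝ) {ρ : M.Cell → ℝ} (hρ : ∀ K, 0 < ρ K) :
    ∃ φ, ∀ ψ, M.pbEnergy ε ρ φ ≤ M.pbEnergy ε ρ ψ :=
  (M.continuous_pbEnergy ε ρ).exists_forall_le (M.tendsto_pbEnergy_cocompact ε hρ)

theorem sum_vol_mul_discLap_mul (φ ψ : M.Cell → ℝ) :
    ∑ K, M.vol K * discLap M φ K * ψ K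
      = -∑ σ, M.w σ * (φ (M.right σ) - φ (M.left σ)) * (ψ (M.right σ) - ψ (M.left σ)) := by
  have hvol : ∀ K, M.vol K * discLap M φ K = ∑ σ,
      ((if M.left σ = K then M.w σ * (φ (M.right σ) - φ K) else 0)
        + (if M.right σ = K then M.w σ * (φ (M.left σ) - φ K) else 0)) := fun K => by
    rw [discLap, ← mul_assoc, mul_one_div_cancel (M.vol_pos K).ne', one_mul]
  simp only [hvol, Finset.sum_mul, add_mul, ite_mul, zero_mul]
  rw [Finset.sum_comm, ← Finset.sum_neg_distrib]
  refine Finset.sum_congr rfl fun σ _ => ?_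
  rw [Finset.sum_add_distrib, Finset.sum_ite_eq, Finset.sum_ite_eq]
  simp only [Finset.mem_univ, if_true]
  ring

theorem hasDerivAt_pbEnergy_add_smul (ε : ℝ) (ρ φ ψ : M.Cell → ℝ) :
    HasDerivAt (fun t : ℝ => M.pbEnergy ε ρ (φ + t • ψ))
      (∑ K, M.vol K * (-ε ^ 2 * discLap M φ K + Real.exp (φ K) - ρ K) * ψ K) 0 := by
  have hline : ∀ K, HasDerivAt (fun t : ℝ => (φ + t • ψ) K) (ψ K) 0 := fun K => by
    simpa using ((hasDerivAt_id (0 : ℝ)).mul_const (ψ K)).const_add (φ K)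
  have hdirichlet := (HasDerivAt.fun_sum (u := Finset.univ) fun σ _ =>
    ((((hline (M.right σ)).fun_sub (hline (M.left σ))).fun_pow 2).const_mul (M.w σ))).const_mul
    (ε ^ 2 / 2)
  have hbulk := HasDerivAt.fun_sum (u := Finset.univ) fun K _ =>
    (((hline K).exp).fun_sub ((hline K).const_mul (ρ K))).const_mul (M.vol K)
  refine (hdirichlet.add hbulk).congr_deriv ?_
  simp only [zero_smul, add_zero, Nat.cast_ofNat]
  have hsplit : ∑ K, M.vol K * (-ε ^ 2 * discLap M φ K + Real.exp (φ K) - ρ K) * ψ K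
      = -ε ^ 2 * ∑ K, M.vol K * discLap M φ K * ψ K
        + ∑ K, M.vol K * (Real.exp (φ K) * ψ K - ρ K * ψ K) := by
    rw [Finset.mul_sum, ← Finset.sum_add_distrib]
    exact Finset.sum_congr rfl fun K _ => by ring
  rw [hsplit, M.sum_vol_mul_discLap_mul, neg_mul_neg]
  congr 1
  rw [Finset.mul_sum, Finset.mul_sum]
  exact Finset.sum_congr rfl fun σ _ => by ring

theorem pbEquation_of_forall_pbEnergy_le {ε : ℝ} {ρ φ : M.Cell → ℝ}
    (hmin : ∀ ψ, M.pbEnergy ε ρ φ ≤ M.pbEnergy ε ρ ψ) (K : M.Cell) :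
    -ε ^ 2 * discLap M φ K + Real.exp (φ K) = ρ K := by
  have hloc : IsLocalMin (fun t : ℝ => M.pbEnergy ε ρ (φ + t • Pi.single K 1)) 0 :=
    Eventually.of_forall fun t => by simpa using hmin _
  have hzero := hloc.hasDerivAt_eq_zero (M.hasDerivAt_pbEnergy_add_smul ε ρ φ _)
  simp only [Pi.single_apply, mul_ite, mul_one, mul_zero, Finset.sum_ite_eq',
    Finset.mem_univ, if_true] at hzero
  have := (mul_eq_zero.mp hzero).resolve_left (M.vol_pos K).ne'
  linarith

end DiscMesh

theorem discrete_PB_existence_general (M : DiscMesh) (ε : ℝ)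
    (ρ : M.Cell → ℝ) (hρ : ∀ K, 0 < ρ K) :
    ∃ φ : M.Cell → ℝ, ∀ K, -ε ^ 2 * discLap M φ K + Real.exp (φ K) = ρ K := by
  obtain ⟨φ, hmin⟩ := M.exists_forall_pbEnergy_le ε hρ
  exact ⟨φ, M.pbEquation_of_forall_pbEnergy_le hmin⟩

/-- Existence of a solution of the discrete Poisson–Boltzmann equation for a
strictly positive discrete density. -/
theorem discrete_PB_existence (M : DiscMesh) (ε : ℝ) (hε : 0 < ε)
    (ρ : M.Cell → ℝ) (hρ : ∀ K, 0 < ρ K) :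
    ∃ φ : M.Cell → ℝ, ∀ K, -ε ^ 2 * discLap M φ K + Real.exp (φ K) = ρ K :=
  discrete_PB_existence_general M ε ρ hρ
end

section
/- L∞ bound on the discrete potential: if φ : M → ℝ solves the discrete Poisson-Boltzmann equation -ε²(Δ_M φ)_K + e^{φ_K} = ρ_K with Neumann boundary conditions, and 0 < c ≤ ρ_K ≤ C for all K ∈ M, then ln(c) ≤ φ_K ≤ ln(C) for all K ∈ M. -/
lemma lap_nonpos (M : DiscMesh) (φ : M.Cell → ℝ) (K : M.Cell)
    (h : ∀ L, φ L ≤ φ K) : discLap M φ K ≤ 0 := by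
  unfold discLap
  apply mul_nonpos_of_nonneg_of_nonpos
  · have := M.vol_pos K; positivity
  · apply Finset.sum_nonpos
    intro σ _
    apply add_nonpos <;> split_ifs <;>
      first
      | exact mul_nonpos_of_nonneg_of_nonpos (M.w_pos σ).le (sub_nonpos.2 (h _))
      | exact le_refl 0

lemma lap_nonneg (M : DiscMesh) (φ : M.Cell → ℝ) (K : M.Cell)
    (h : ∀ L, φ K ≤ φ L) : 0 ≤ discLap M φ K := by
  unfold discLap
  apply mul_nonneg
  · have := M.vol_pos K; positivity
  · apply Finset.sum_nonneg
    intro σ _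
    apply add_nonneg <;> split_ifs <;>
      first
      | exact mul_nonneg (M.w_pos σ).le (sub_nonneg.2 (h _))
      | exact le_refl 0

/-- `L∞` bound on the discrete potential: `ln c ≤ φ_K ≤ ln C` whenever
`0 < c ≤ ρ_K ≤ C`. -/
theorem discrete_PB_linfty_bound (M : DiscMesh) (ε : ℝ) (hε : 0 < ε)
    (φ ρ : M.Cell → ℝ) (c C : ℝ) (hc : 0 < c)
    (hφ : ∀ K, -ε ^ 2 * discLap M φ K + Real.exp (φ K) = ρ K)
    (hρ : ∀ K, c ≤ ρ K ∧ ρ K ≤ C) :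
    ∀ K, Real.log c ≤ φ K ∧ φ K ≤ Real.log C := by
  intro K
  have hNe : Nonempty M.Cell := ⟨K⟩
  obtain ⟨Kmax, hmax⟩ := Finite.exists_max φ
  obtain ⟨Kmin, hmin⟩ := Finite.exists_min φ
  have hC : 0 < C := lt_of_lt_of_le hc (le_trans (hρ K).1 (hρ K).2)
  constructor
  · -- lower bound
    have hL : 0 ≤ discLap M φ Kmin := lap_nonneg M φ Kmin hmin
    have heq := hφ Kmin
    have hexp : c ≤ Real.exp (φ Kmin) := by nlinarith [(hρ Kmin).1, sq_nonneg ε]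
    calc Real.log c ≤ φ Kmin := (Real.log_le_iff_le_exp hc).2 hexp
      _ ≤ φ K := hmin K
  · -- upper bound
    have hL : discLap M φ Kmax ≤ 0 := lap_nonpos M φ Kmax hmax
    have heq := hφ Kmax
    have hexp : Real.exp (φ Kmax) ≤ C := by nlinarith [(hρ Kmax).2, sq_nonneg ε]
    calc φ K ≤ φ Kmax := hmax K
      _ ≤ Real.log C := (Real.le_log_iff_exp_le hC).2 hexp
end

section
/- Uniqueness for the discrete Poisson-Boltzmann equation: for a given ρ : M → ℝ with ρ_K > 0 for all K, the solution φ : M → ℝ of -ε²(Δ_M φ)_K + e^{φ_K} = ρ_K with homogeneous Neumann boundary conditions is unique. -/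
lemma discLap_sub (M : DiscMesh) (φ φ' : M.Cell → ℝ) (K : M.Cell) :
    discLap M (fun x => φ x - φ' x) K = discLap M φ K - discLap M φ' K := by
  unfold discLap
  rw [← mul_sub, ← Finset.sum_sub_distrib]
  congr 1
  apply Finset.sum_congr rfl
  intro σ _
  split_ifs <;> ring

lemma discLap_nonpos_at_max (M : DiscMesh) (ψ : M.Cell → ℝ) (K : M.Cell)
    (hmax : ∀ L, ψ L ≤ ψ K) : discLap M ψ K ≤ 0 := by
  unfold discLap
  apply mul_nonpos_of_nonneg_of_nonpos
  · have := M.vol_pos K; positivity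
  · apply Finset.sum_nonpos
    intro σ _
    have h1 : (if M.left σ = K then M.w σ * (ψ (M.right σ) - ψ K) else 0) ≤ 0 := by
      split_ifs
      · exact mul_nonpos_of_nonneg_of_nonpos (M.w_pos σ).le
          (by linarith [hmax (M.right σ)])
      · exact le_refl 0
    have h2 : (if M.right σ = K then M.w σ * (ψ (M.left σ) - ψ K) else 0) ≤ 0 := by
      split_ifs
      · exact mul_nonpos_of_nonneg_of_nonpos (M.w_pos σ).le
          (by linarith [hmax (M.left σ)])
      · exact le_refl 0
    linarith

lemma discrete_PB_le (M : DiscMesh) (ε : ℝ) (hε : 0 < ε)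
    (ρ φ φ' : M.Cell → ℝ)
    (hφ : ∀ K, -ε ^ 2 * discLap M φ K + Real.exp (φ K) = ρ K)
    (hφ' : ∀ K, -ε ^ 2 * discLap M φ' K + Real.exp (φ' K) = ρ K) :
    ∀ L, φ L ≤ φ' L := by
  intro L
  have hne : Nonempty M.Cell := ⟨L⟩
  obtain ⟨K, -, hK⟩ := Finset.exists_max_image Finset.univ
    (fun x => φ x - φ' x) ⟨L, Finset.mem_univ L⟩
  have hmax : ∀ x, φ x - φ' x ≤ φ K - φ' K := fun x => hK x (Finset.mem_univ x)
  have hlap : discLap M (fun x => φ x - φ' x) K ≤ 0 :=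
    discLap_nonpos_at_max M _ K hmax
  rw [discLap_sub] at hlap
  have h1 := hφ K
  have h2 := hφ' K
  have hexp : Real.exp (φ K) ≤ Real.exp (φ' K) := by nlinarith [sq_nonneg ε]
  have hKle : φ K ≤ φ' K := Real.exp_le_exp.mp hexp
  linarith [hmax L]

/-- Uniqueness of the solution of the discrete Poisson–Boltzmann equation. -/
theorem discrete_PB_uniqueness (M : DiscMesh) (ε : ℝ) (hε : 0 < ε)
    (ρ φ φ' : M.Cell → ℝ) (hρ : ∀ K, 0 < ρ K)
    (hφ : ∀ K, -ε ^ 2 * discLap M φ K + Real.exp (φ K) = ρ K)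
    (hφ' : ∀ K, -ε ^ 2 * discLap M φ' K + Real.exp (φ' K) = ρ K) :
    φ = φ' := by
  funext K
  exact le_antisymm (discrete_PB_le M ε hε ρ φ φ' hφ hφ' K)
    (discrete_PB_le M ε hε ρ φ' φ hφ' hφ K)
end
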